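/- Gentle Operator Lemma for ensembles: Let {p_X(x), ρ_x}_{x∈𝒳} be a finite ensemble of density operators on a finite-dimensional Hilbert space with expected density operator ρ = Σ_x p_X(x)ρ_x, and let Λ be an operator with 0 ≤ Λ ≤ I such that Tr{Λρ} ≥ 1 − ε for some ε ≥ 0. Then the expected trace distance between √Λ ρ_x √Λ and ρ_x satisfies Σ_x p_X(x) ‖ √Λ ρ_x √Λ − ρ_x ‖₁ ≤ 2√ε. -/

import Mathlib

open scoped BigOperators ComplexOrder

noncomputable section

namespace QIC

/-- von Neumann entropy in bits, via eigenvalues (convention `0·log 0 = 0`). -/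
def vnEntropy {m : Type*} [Fintype m] [DecidableEq m] (ρ : Matrix m m ℂ) : ℝ :=
  if h : ρ.IsHermitian then -∑ i, h.eigenvalues i * Real.logb 2 (h.eigenvalues i) else 0

/-- min-entropy in bits: `−log₂` of the largest eigenvalue. -/
def minEntropy {m : Type*} [Fintype m] [DecidableEq m] (ρ : Matrix m m ℂ) : ℝ :=
  if h : ρ.IsHermitian then -Real.logb 2 (⨆ i, h.eigenvalues i) else 0

/-- A density operator: positive semidefinite with unit trace. -/
def IsDensity {m : Type*} [Fintype m] [DecidableEq m] (ρ : Matrix m m ℂ) : Prop :=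
  ρ.PosSemidef ∧ ρ.trace = 1

/-- A POVM: a finite family of positive semidefinite operators summing to the identity. -/
def IsPOVM {ι m : Type*} [Fintype ι] [Fintype m] [DecidableEq m]
    (Λ : ι → Matrix m m ℂ) : Prop :=
  (∀ i, (Λ i).PosSemidef) ∧ ∑ i, Λ i = 1

/-- A probability distribution on a finite alphabet. -/
def IsProbDist {X : Type*} [Fintype X] (p : X → ℝ) : Prop :=
  (∀ x, 0 ≤ p x) ∧ ∑ x, p x = 1

/-- `n`-fold tensor product of matrices on `Fin d`. -/
def tensorPow {d n : ℕ} (f : Fin n → Matrix (Fin d) (Fin d) ℂ) :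
    Matrix (Fin n → Fin d) (Fin n → Fin d) ℂ :=
  Matrix.of fun i j => ∏ k, f k (i k) (j k)

/-- Square root of a positive semidefinite matrix (the definition of the former
`Matrix.PosSemidef.sqrt`, removed from Mathlib). -/
def PosSemidef.sqrt {m : Type*} [Fintype m] [DecidableEq m] {X : Matrix m m ℂ}
    (hX : X.PosSemidef) : Matrix m m ℂ :=
  (hX.1.eigenvectorUnitary : Matrix m m ℂ) * Matrix.diagonal ((↑) ∘ Real.sqrt ∘ hX.1.eigenvalues) *
    (star hX.1.eigenvectorUnitary : Matrix m m ℂ)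

/-- Positive semidefinite square root (zero on non-PSD matrices). -/
def msqrt {m : Type*} [Fintype m] [DecidableEq m] (X : Matrix m m ℂ) : Matrix m m ℂ :=
  open Classical in if h : X.PosSemidef then PosSemidef.sqrt h else 0

/-- Trace norm `‖X‖₁ = Tr √(XᴴX)`. -/
def traceNorm {m : Type*} [Fintype m] [DecidableEq m] (X : Matrix m m ℂ) : ℝ :=
  (PosSemidef.sqrt (Matrix.posSemidef_conjTranspose_mul_self X)).trace.re

/-- Loewner order: `A ≤ B` iff `B − A` is positive semidefinite. -/
def loewnerLE {m : Type*} [Fintype m] [DecidableEq m] (A B : Matrix m m ℂ) : Prop :=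
  (B - A).PosSemidef

/-!
Write `B = √Λ` and `X = BρB - ρ`. As `X` is self-adjoint, `‖X‖₁ = Re Tr(SX)` for the unitary
sign `S` of `X`, and `SX = (SB)ρ(B - 1) + S(B - 1)ρ`. Cauchy–Schwarz for the semi-inner product
`⟨A, C⟩ = Tr(CρAᴴ)` bounds both terms by `√(Tr ρ) √(Tr((B - 1)²ρ))`, and `(B - 1)² ≤ 1 - Λ`
because `Λ ≤ √Λ` when `0 ≤ Λ ≤ 1`. This gives `‖√Λρ_x√Λ - ρ_x‖₁ ≤ 2√(Tr((1 - Λ)ρ_x))` for each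
state, and concavity of `√` bounds the average by `2√(Tr((1 - Λ)ρ)) ≤ 2√ε`.
-/

open scoped MatrixOrder
open Matrix

section CFC

variable {A : Type*} [PartialOrder A] [Ring A] [StarRing A] [TopologicalSpace A]
  [StarOrderedRing A] [Algebra ℝ A] [ContinuousFunctionalCalculus ℝ A IsSelfAdjoint]
  [NonnegSpectrumClass ℝ A] [IsSemitopologicalRing A] [T2Space A]

lemma le_sqrt_self_of_le_one {a : A} (h₀ : 0 ≤ a) (h₁ : a ≤ 1) : a ≤ CFC.sqrt a := by
  rw [CFC.sqrt_eq_real_sqrt a, cfcₙ_eq_cfc]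
  conv_lhs => rw [← cfc_id' ℝ a]
  exact cfc_mono fun x hx => Real.le_sqrt_self_iff.mpr ((CFC.le_one_iff a).mp h₁ x hx)

lemma sqrt_sub_one_mul_self_le {a : A} (h₀ : 0 ≤ a) (h₁ : a ≤ 1) :
    (CFC.sqrt a - 1) * (CFC.sqrt a - 1) ≤ 1 - a := by
  have hsq : CFC.sqrt a * CFC.sqrt a = a := CFC.sqrt_mul_sqrt_self a
  have hle := le_sqrt_self_of_le_one h₀ h₁
  have hgap : 1 - a =
      (CFC.sqrt a - 1) * (CFC.sqrt a - 1) + ((CFC.sqrt a - a) + (CFC.sqrt a - a)) := by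
    simp only [sub_mul, mul_sub, one_mul, mul_one, hsq]
    abel
  rw [hgap]
  exact le_add_of_nonneg_right (add_nonneg (sub_nonneg.mpr hle) (sub_nonneg.mpr hle))

end CFC

section Matrix

variable {𝕜 n : Type*} [RCLike 𝕜] [Fintype n]

lemma norm_trace_mul_mul_conjTranspose_le {ρ : Matrix n n 𝕜} (hρ : ρ.PosSemidef)
    (A C : Matrix n n 𝕜) :
    ‖(C * ρ * Aᴴ).trace‖ ≤
      √(RCLike.re (A * ρ * Aᴴ).trace) * √(RCLike.re (C * ρ * Cᴴ).trace) :=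
  let _ := ρ.toMatrixSeminormedAddCommGroup hρ
  let _ := ρ.toMatrixInnerProductSpace hρ
  norm_inner_le_norm (𝕜 := 𝕜) A C

variable [DecidableEq n]

lemma re_trace_mul_nonneg {A ρ : Matrix n n 𝕜} (hA : 0 ≤ A) (hρ : ρ.PosSemidef) :
    0 ≤ RCLike.re (A * ρ).trace := by
  obtain ⟨D, rfl⟩ := CStarAlgebra.nonneg_iff_eq_star_mul_self.mp hA
  rw [mul_assoc, trace_mul_comm, star_eq_conjTranspose]
  exact (RCLike.nonneg_iff.mp (hρ.mul_mul_conjTranspose_same D).trace_nonneg).1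

lemma re_trace_mul_mono {A A' ρ : Matrix n n 𝕜} (h : A ≤ A') (hρ : ρ.PosSemidef) :
    RCLike.re (A * ρ).trace ≤ RCLike.re (A' * ρ).trace := by
  have := re_trace_mul_nonneg (sub_nonneg.mpr h) hρ
  rwa [sub_mul, trace_sub, map_sub, sub_nonneg] at this

lemma trace_unitary_mul_mul_conjTranspose {S : Matrix n n 𝕜} (hS : S ∈ unitary (Matrix n n 𝕜))
    (C ρ : Matrix n n 𝕜) : (S * C * ρ * (S * C)ᴴ).trace = (C * ρ * Cᴴ).trace := by
  rw [conjTranspose_mul, show S * C * ρ * (Cᴴ * Sᴴ) = S * (C * ρ * Cᴴ) * Sᴴ by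
    simp only [mul_assoc], trace_mul_cycle, ← star_eq_conjTranspose S,
    Unitary.star_mul_self_of_mem hS, one_mul]

lemma exists_unitary_mul_eq_abs {X : Matrix n n 𝕜} (hX : IsSelfAdjoint X) :
    ∃ S ∈ unitary (Matrix n n 𝕜), S * X = CFC.abs X := by
  have hcont (f : ℝ → ℝ) : ContinuousOn f (spectrum ℝ X) :=
    X.finite_real_spectrum.continuousOn f
  refine ⟨cfc (fun x : ℝ => if x < 0 then -1 else 1) X, ?_, ?_⟩
  · rw [cfc_unitary_iff _ X hX (hcont _)]
    intro x _
    split_ifs <;> norm_num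
  · rw [CFC.abs_eq_cfcₙ_norm X hX, cfcₙ_eq_cfc]
    conv_lhs => arg 2; rw [← cfc_id' ℝ X]
    rw [← cfc_mul _ _ X (hcont _) (hcont _)]
    refine cfc_congr fun x _ => ?_
    split_ifs with h
    · rw [Real.norm_of_nonpos h.le]; ring
    · rw [Real.norm_of_nonneg (not_lt.mp h)]; ring

end Matrix

section TraceNorm

variable {m : Type*} [Fintype m] [DecidableEq m]

lemma PosSemidef.sqrt_eq_cfcSqrt {A : Matrix m m ℂ} (hA : A.PosSemidef) :
    QIC.PosSemidef.sqrt hA = CFC.sqrt A := by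
  rw [CFC.sqrt_eq_cfc, cfc_nnreal_eq_real _ A hA.nonneg, hA.1.cfc_eq, IsHermitian.cfc,
    Unitary.conjStarAlgAut_apply, QIC.PosSemidef.sqrt]
  congr 3
  funext i
  simp [Real.coe_sqrt, hA.eigenvalues_nonneg i]

lemma msqrt_eq_cfcSqrt {A : Matrix m m ℂ} (hA : A.PosSemidef) : msqrt A = CFC.sqrt A := by
  rw [msqrt, dif_pos hA, PosSemidef.sqrt_eq_cfcSqrt]

lemma traceNorm_eq_re_trace_abs (X : Matrix m m ℂ) : traceNorm X = (CFC.abs X).trace.re := by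
  rw [traceNorm, PosSemidef.sqrt_eq_cfcSqrt, CFC.abs, star_eq_conjTranspose]

theorem traceNorm_sqrt_mul_mul_sqrt_sub_le {ρ Λ : Matrix m m ℂ} (hρ : ρ.PosSemidef)
    (hΛ₀ : 0 ≤ Λ) (hΛ₁ : Λ ≤ 1) :
    traceNorm (CFC.sqrt Λ * ρ * CFC.sqrt Λ - ρ) ≤
      2 * √ρ.trace.re * √((1 - Λ) * ρ).trace.re := by
  set B := CFC.sqrt Λ
  have hBH : Bᴴ = B := (CFC.sqrt_nonneg Λ).isSelfAdjoint
  have hB1H : (B - 1)ᴴ = B - 1 := by rw [conjTranspose_sub, hBH, conjTranspose_one]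
  have hX : IsSelfAdjoint (B * ρ * B - ρ) :=
    (hρ.1.isSelfAdjoint.conjugate_self (CFC.sqrt_nonneg Λ).isSelfAdjoint).sub hρ.1.isSelfAdjoint
  obtain ⟨S, hS, hSX⟩ := exists_unitary_mul_eq_abs hX
  have hη : ((B - 1) * ρ * (B - 1)ᴴ).trace.re ≤ ((1 - Λ) * ρ).trace.re := by
    rw [hB1H, trace_mul_cycle]
    exact re_trace_mul_mono (sqrt_sub_one_mul_self_le hΛ₀ hΛ₁) hρ
  have hBρB : (B * ρ * Bᴴ).trace.re ≤ ρ.trace.re := by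
    rw [hBH, trace_mul_cycle, CFC.sqrt_mul_sqrt_self Λ hΛ₀]
    simpa using re_trace_mul_mono hΛ₁ hρ
  have h₁ : ‖(S * B * ρ * (B - 1)ᴴ).trace‖ ≤ √((1 - Λ) * ρ).trace.re * √ρ.trace.re := by
    refine (norm_trace_mul_mul_conjTranspose_le hρ _ _).trans ?_
    rw [trace_unitary_mul_mul_conjTranspose hS]
    gcongr
    exacts [hη, hBρB]
  have h₂ : ‖(S * (B - 1) * ρ * 1ᴴ).trace‖ ≤ √ρ.trace.re * √((1 - Λ) * ρ).trace.re := by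
    refine (norm_trace_mul_mul_conjTranspose_le hρ _ _).trans ?_
    rw [trace_unitary_mul_mul_conjTranspose hS, conjTranspose_one, one_mul, mul_one]
    gcongr
    exacts [le_rfl, hη]
  have hdecomp : S * (B * ρ * B - ρ) = S * B * ρ * (B - 1)ᴴ + S * (B - 1) * ρ * 1ᴴ := by
    rw [hB1H, conjTranspose_one]
    noncomm_ring
  calc traceNorm (B * ρ * B - ρ) = (S * (B * ρ * B - ρ)).trace.re := by
        rw [traceNorm_eq_re_trace_abs, hSX]
    _ ≤ ‖(S * B * ρ * (B - 1)ᴴ).trace‖ + ‖(S * (B - 1) * ρ * 1ᴴ).trace‖ := by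
        rw [hdecomp, trace_add]
        exact (Complex.re_le_norm _).trans (norm_add_le _ _)
    _ ≤ _ := by linarith

end TraceNorm

lemma sum_mul_sqrt_le_sqrt_sum_mul {ι : Type*} (s : Finset ι) {w f : ι → ℝ}
    (hw₀ : ∀ i ∈ s, 0 ≤ w i) (hw₁ : ∑ i ∈ s, w i = 1) (hf : ∀ i ∈ s, 0 ≤ f i) :
    ∑ i ∈ s, w i * √(f i) ≤ √(∑ i ∈ s, w i * f i) := by
  simpa only [smul_eq_mul] using Real.strictConcaveOn_sqrt.concaveOn.le_map_sum hw₀ hw₁ hf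

theorem gentle_operator_lemma_for_ensembles_general
    {X : Type*} [Fintype X] {m : Type*} [Fintype m] [DecidableEq m]
    (p : X → ℝ) (hp : IsProbDist p)
    (ρ : X → Matrix m m ℂ) (hρ : ∀ x, IsDensity (ρ x))
    (Λ : Matrix m m ℂ) (hΛ₀ : Λ.PosSemidef) (hΛ₁ : loewnerLE Λ 1)
    (ε : ℝ)
    (hsucc : 1 - ε ≤ ((Λ * ∑ x, p x • ρ x).trace).re) :
    ∑ x, p x * traceNorm (msqrt Λ * ρ x * msqrt Λ - ρ x) ≤ 2 * Real.sqrt ε := by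
  obtain ⟨hp₀, hp₁⟩ := hp
  have hΛ₁' : Λ ≤ 1 := hΛ₁
  set δ : X → ℝ := fun x => ((1 - Λ) * ρ x).trace.re
  have hstate (x : X) : traceNorm (msqrt Λ * ρ x * msqrt Λ - ρ x) ≤ 2 * √(δ x) := by
    simpa [msqrt_eq_cfcSqrt hΛ₀, (hρ x).2] using
      traceNorm_sqrt_mul_mul_sqrt_sub_le (hρ x).1 hΛ₀.nonneg hΛ₁'
  have hmean : ∑ x, p x * δ x ≤ ε := by
    have hδ (x : X) : δ x = 1 - (Λ * ρ x).trace.re := by simp [δ, sub_mul, (hρ x).2]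
    have hlin : (Λ * ∑ x, p x • ρ x).trace.re = ∑ x, p x * (Λ * ρ x).trace.re := by
      simp [Finset.mul_sum, trace_sum]
    simp only [hδ, mul_sub, mul_one, Finset.sum_sub_distrib, hp₁]
    linarith
  calc ∑ x, p x * traceNorm (msqrt Λ * ρ x * msqrt Λ - ρ x)
      ≤ ∑ x, p x * (2 * √(δ x)) := by gcongr with x; exacts [hp₀ x, hstate x]
    _ = 2 * ∑ x, p x * √(δ x) := by rw [Finset.mul_sum]; simp only [mul_left_comm]
    _ ≤ 2 * √(∑ x, p x * δ x) := by
        gcongr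
        exact sum_mul_sqrt_le_sqrt_sum_mul _ (fun x _ => hp₀ x) hp₁
          (fun x _ => re_trace_mul_nonneg (sub_nonneg.mpr hΛ₁') (hρ x).1)
    _ ≤ 2 * √ε := by gcongr

/-- **Gentle Operator Lemma for ensembles.**
If `0 ≤ Λ ≤ I` succeeds with probability at least `1 − ε` on the expected state
`ρ = Σ_x p(x) ρ_x` of an ensemble, then the expected trace distance between
`√Λ ρ_x √Λ` and `ρ_x` is at most `2√ε`. -/
theorem gentle_operator_lemma_for_ensembles
    {X : Type*} [Fintype X] {m : Type*} [Fintype m] [DecidableEq m]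
    (p : X → ℝ) (hp : IsProbDist p)
    (ρ : X → Matrix m m ℂ) (hρ : ∀ x, IsDensity (ρ x))
    (Λ : Matrix m m ℂ) (hΛ₀ : Λ.PosSemidef) (hΛ₁ : loewnerLE Λ 1)
    (ε : ℝ) (hε : 0 ≤ ε)
    (hsucc : 1 - ε ≤ ((Λ * ∑ x, p x • ρ x).trace).re) :
    ∑ x, p x * traceNorm (msqrt Λ * ρ x * msqrt Λ - ρ x) ≤ 2 * Real.sqrt ε :=
  gentle_operator_lemma_for_ensembles_general p hp ρ hρ Λ hΛ₀ hΛ₁ ε hsucc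

end QIC
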